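/- For the two-dimensional case, the Kolmogorov–Arnold outer sum has exactly 2n+1 = 5 terms: any continuous f : [0,1]² → ℝ admits a representation f(x₁,x₂) = Σ_{q=0}^{4} Φ_q(φ_{q,1}(x₁) + φ_{q,2}(x₂)) with all Φ_q, φ_{q,p} continuous univariate functions. -/

import Mathlib

/-!
Kahane's Baire-category proof. Call a family `e` of inner functions good for `f ≠ 0` if outer
functions of sup norm at most `‖f‖ / 3` reproduce `f` up to an error below `(4 / 5) ‖f‖`. Being
good for `f` is an open condition on `e`, and a dense one: any `e` can be perturbed into step
functions, constant on the plateaus of five grids that are shifted by a fifth of their mesh, with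
values chosen so that each sum `e q 1 s + e q 2 t` separates the plateau rectangles. An outer
function with bumps of height `f / 3` at the separated values then reproduces `f / 3` for each of
the at least three `q` whose grid puts `(s, t)` on a plateau rectangle, and errs by at most
`‖f‖ / 3` for the at most two others. By Baire some `e` is good for all members of a dense
sequence, so it shrinks the norm of every `f` by the factor `9 / 10` at the cost of outer functions
of norm `≤ ‖f‖`; iterating and summing the geometric series of outer functions gives an exact
representation.
-/

open Set unitInterval BoundedContinuousFunction Filter Topology

noncomputable section

theorem ContinuousLinearMap.surjective_of_approx_preimage {𝕜 E F : Type*} [NormedField 𝕜]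
    [NormedAddCommGroup E] [NormedSpace 𝕜 E] [CompleteSpace E]
    [NormedAddCommGroup F] [NormedSpace 𝕜 F] (T : E →L[𝕜] F) {C r : NNReal} (hr : r < 1)
    (h : ∀ y, ∃ x, ‖x‖ ≤ C * ‖y‖ ∧ ‖y - T x‖ ≤ r * ‖y‖) : Function.Surjective T := by
  choose g hg using h
  intro y
  let res : ℕ → F := fun n => (fun z => z - T (g z))^[n] y
  have hres : ∀ n, ‖res n‖ ≤ r ^ n * ‖y‖ := by
    intro n
    induction n with
    | zero => simp [res]
    | succ n ih =>
      calc ‖res (n + 1)‖ ≤ r * ‖res n‖ := by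
            simp only [res, Function.iterate_succ_apply']; exact (hg _).2
        _ ≤ r * (r ^ n * ‖y‖) := by gcongr
        _ = r ^ (n + 1) * ‖y‖ := by ring
  have hsum : Summable fun n => g (res n) := by
    refine .of_norm_bounded ((summable_geometric_of_lt_one r.2 hr).mul_right (C * ‖y‖)) fun n => ?_
    calc ‖g (res n)‖ ≤ C * ‖res n‖ := (hg _).1
      _ ≤ C * (r ^ n * ‖y‖) := by gcongr; exact hres n
      _ = r ^ n * (C * ‖y‖) := by ring
  have hpartial : ∀ n, T (∑ i ∈ Finset.range n, g (res i)) = y - res n := by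
    intro n
    induction n with
    | zero => simp [res]
    | succ n ih =>
      rw [Finset.sum_range_succ, map_add, ih]
      simp only [res, Function.iterate_succ_apply']
      abel
  have hres0 : Tendsto res atTop (𝓝 0) := by
    refine squeeze_zero_norm hres ?_
    simpa using (tendsto_pow_atTop_nhds_zero_of_lt_one r.2 hr).mul_const ‖y‖
  refine ⟨∑' n, g (res n),
    tendsto_nhds_unique ((T.continuous.tendsto _).comp hsum.hasSum.tendsto_sum_nat) ?_⟩
  simpa [Function.comp_def, hpartial] using (tendsto_const_nhds (x := y)).sub hres0

namespace KolmogorovArnold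

section Superposition

variable {X Y ι : Type*} [TopologicalSpace X] [TopologicalSpace Y]

def innerSum (e : C(X, ℝ) × C(Y, ℝ)) : C(X × Y, ℝ) := e.1.comp .fst + e.2.comp .snd

@[simp]
lemma innerSum_apply (e : C(X, ℝ) × C(Y, ℝ)) (z : X × Y) : innerSum e z = e.1 z.1 + e.2 z.2 :=
  rfl

lemma continuous_innerSum : Continuous (innerSum : C(X, ℝ) × C(Y, ℝ) → C(X × Y, ℝ)) :=
  ((ContinuousMap.continuous_precomp _).comp continuous_fst).add
    ((ContinuousMap.continuous_precomp _).comp continuous_snd)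

variable [CompactSpace X] [CompactSpace Y] [Fintype ι]

def superpose (e : ι → C(X, ℝ) × C(Y, ℝ)) : (ι → ℝ →ᵇ ℝ) →L[ℝ] C(X × Y, ℝ) :=
  LinearMap.mkContinuous
    { toFun := fun Φ => ∑ q, (Φ q).toContinuousMap.comp (innerSum (e q))
      map_add' := fun Φ Ψ => by ext; simp [Finset.sum_add_distrib]
      map_smul' := fun c Φ => by ext; simp [Finset.mul_sum] }
    (Fintype.card ι) fun Φ => by
      refine (ContinuousMap.norm_le _ (by positivity)).2 fun z => ?_
      simp only [LinearMap.coe_mk, AddHom.coe_mk, ContinuousMap.coe_sum, ContinuousMap.comp_apply,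
        Finset.sum_apply]
      calc ‖∑ q, (Φ q) (innerSum (e q) z)‖ ≤ ∑ _q : ι, ‖Φ‖ :=
            (norm_sum_le _ _).trans <| Finset.sum_le_sum fun q _ =>
              ((Φ q).norm_coe_le_norm _).trans (norm_le_pi_norm Φ q)
        _ = Fintype.card ι * ‖Φ‖ := by simp

lemma superpose_apply (e : ι → C(X, ℝ) × C(Y, ℝ)) (Φ : ι → ℝ →ᵇ ℝ) (z : X × Y) :
    superpose e Φ z = ∑ q, Φ q ((e q).1 z.1 + (e q).2 z.2) := by
  simp [superpose]

lemma continuous_superpose_apply (Φ : ι → ℝ →ᵇ ℝ) :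
    Continuous fun e : ι → C(X, ℝ) × C(Y, ℝ) => superpose e Φ := by
  simp only [superpose, LinearMap.mkContinuous_apply, LinearMap.coe_mk, AddHom.coe_mk]
  exact continuous_finsetSum _ fun q _ =>
    (ContinuousMap.continuous_postcomp _).comp (continuous_innerSum.comp (continuous_apply q))

def approxSet (f : C(X × Y, ℝ)) (B θ : ℝ) : Set (ι → C(X, ℝ) × C(Y, ℝ)) :=
  {e | ∃ Φ : ι → ℝ →ᵇ ℝ, (∀ q, ‖Φ q‖ ≤ B) ∧ ‖f - superpose e Φ‖ < θ}

lemma isOpen_approxSet (f : C(X × Y, ℝ)) (B θ : ℝ) : IsOpen (approxSet (ι := ι) f B θ) := by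
  have : approxSet (ι := ι) f B θ =
      ⋃ Φ ∈ {Φ : ι → ℝ →ᵇ ℝ | ∀ q, ‖Φ q‖ ≤ B}, {e | ‖f - superpose e Φ‖ < θ} := by
    ext; simp [approxSet]
  rw [this]
  exact isOpen_biUnion fun Φ _ =>
    isOpen_lt (continuous_const.sub (continuous_superpose_apply Φ)).norm continuous_const

lemma exists_approx_of_forall_mem_approxSet {u : ℕ → C(X × Y, ℝ)} (hu : DenseRange u)
    {e : ι → C(X, ℝ) × C(Y, ℝ)}
    (he : ∀ n, u n ≠ 0 → e ∈ approxSet (u n) (‖u n‖ / 3) (4 / 5 * ‖u n‖)) (g : C(X × Y, ℝ)) :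
    ∃ Φ, ‖Φ‖ ≤ ‖g‖ ∧ ‖g - superpose e Φ‖ ≤ 9 / 10 * ‖g‖ := by
  rcases eq_or_ne g 0 with rfl | hg
  · exact ⟨0, by simp⟩
  have hg' : 0 < ‖g‖ := norm_pos_iff.2 hg
  obtain ⟨n, hn⟩ := hu.exists_dist_lt g (by positivity : 0 < ‖g‖ / 100)
  rw [dist_eq_norm] at hn
  have hun : ‖u n‖ ≤ ‖g‖ + ‖g‖ / 100 := by
    linarith [norm_le_norm_add_norm_sub' (u n) g, norm_sub_rev (u n) g]
  obtain ⟨Φ, hΦ, hΦu⟩ := he n fun h => by simp [h] at hn; linarith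
  refine ⟨Φ, ?_, ?_⟩
  · exact (pi_norm_le_iff_of_nonneg hg'.le).2 fun q => (hΦ q).trans (by linarith)
  · calc ‖g - superpose e Φ‖ ≤ ‖g - u n‖ + ‖u n - superpose e Φ‖ :=
          norm_sub_le_norm_sub_add_norm_sub _ _ _
      _ ≤ 9 / 10 * ‖g‖ := by linarith

end Superposition

lemma le_abs_mul_add_mul {β γ : ℝ} {D E : ℤ} {K : ℕ} (hγ : 0 ≤ γ) (hK : γ * K ≤ β) (hE : E ≠ 0)
    (hEK : |E| < K) : γ ≤ |β * D + γ * E| := by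
  have hE₁ : (1 : ℝ) ≤ |(E : ℝ)| := by exact_mod_cast Int.one_le_abs hE
  have hEK' : |(E : ℝ)| + 1 ≤ K := by exact_mod_cast Int.add_one_le_iff.2 hEK
  rcases eq_or_ne D 0 with rfl | hD
  · rw [Int.cast_zero, mul_zero, zero_add, abs_mul, abs_of_nonneg hγ]
    nlinarith
  · have hD₁ : (1 : ℝ) ≤ |(D : ℝ)| := by exact_mod_cast Int.one_le_abs hD
    have hβ : 0 ≤ β := le_trans (by positivity) hK
    have := abs_sub_abs_le_abs_add (β * D) (γ * E)
    rw [abs_mul, abs_mul, abs_of_nonneg hβ, abs_of_nonneg hγ] at this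
    nlinarith

lemma abs_mul_sub_sum_le {ι : Type*} [Fintype ι] {a : ι → ℝ} {c B ε : ℝ} {G : Finset ι} {p : ℕ}
    (hp : p ≤ G.card) (hc : |c| ≤ B) (hε : 0 ≤ ε) (hG : ∀ q ∈ G, |a q - c| ≤ ε)
    (hB : ∀ q ∉ G, |a q| ≤ B) :
    |p * c - ∑ q, a q| ≤ (Fintype.card ι - p) * B + Fintype.card ι * ε := by
  classical
  have hgood : |∑ q ∈ G, (a q - c)| ≤ G.card * ε :=
    (Finset.abs_sum_le_sum_abs _ _).trans (by simpa using Finset.sum_le_sum hG)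
  have hbad : |∑ q ∈ Gᶜ, a q| ≤ Gᶜ.card * B :=
    (Finset.abs_sum_le_sum_abs _ _).trans
      (by simpa using Finset.sum_le_sum fun q hq => hB q (Finset.mem_compl.1 hq))
  have hcard : (G.card : ℝ) + Gᶜ.card = Fintype.card ι := by
    exact_mod_cast Finset.card_add_card_compl G
  have hp' : (p : ℝ) ≤ G.card := by exact_mod_cast hp
  have hsplit : p * c - ∑ q, a q = (p - G.card) * c - ∑ q ∈ G, (a q - c) - ∑ q ∈ Gᶜ, a q := by
    rw [← Finset.sum_add_sum_compl G a, Finset.sum_sub_distrib, Finset.sum_const, nsmul_eq_mul]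
    ring
  have hmid : |(p - G.card) * c| ≤ (G.card - p) * B := by
    rw [abs_mul, abs_of_nonpos (by linarith)]
    exact mul_le_mul (by linarith) hc (abs_nonneg c) (by linarith)
  have hGε : (G.card : ℝ) * ε ≤ Fintype.card ι * ε :=
    mul_le_mul_of_nonneg_right (by linarith [(Gᶜ.card.cast_nonneg : (0 : ℝ) ≤ _)]) hε
  have hcardB : (G.card : ℝ) * B + Gᶜ.card * B = Fintype.card ι * B := by rw [← add_mul, hcard]
  rw [hsplit]
  linarith [abs_sub ((p - G.card) * c - ∑ q ∈ G, (a q - c)) (∑ q ∈ Gᶜ, a q),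
    abs_sub ((p - G.card) * c) (∑ q ∈ G, (a q - c))]

lemma eventually_abs_sub_le_of_dist_le {X : Type*} [PseudoMetricSpace X] {g : X → ℝ}
    (hg : UniformContinuous g) {ε : ℝ} (hε : 0 < ε) :
    ∀ᶠ N : ℕ in atTop, ∀ x y, dist x y ≤ 1 / N → |g x - g y| ≤ ε := by
  obtain ⟨d, hd, h⟩ := Metric.uniformContinuous_iff.1 hg ε hε
  filter_upwards [tendsto_one_div_atTop_nhds_zero_nat.eventually (gt_mem_nhds hd)] with N hN x y hxy
  exact (h (hxy.trans_lt hN)).le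

def ramp (a b t : ℝ) : ℝ := projIcc (0 : ℝ) 1 zero_le_one ((t - a) / (b - a))

lemma continuous_ramp (a b : ℝ) : Continuous (ramp a b) := by
  unfold ramp; fun_prop

lemma ramp_of_le_left {a b t : ℝ} (hab : a ≤ b) (ht : t ≤ a) : ramp a b t = 0 := by
  rw [ramp, projIcc_of_le_left]
  exact div_nonpos_of_nonpos_of_nonneg (by linarith) (by linarith)

lemma ramp_of_right_le {a b t : ℝ} (hab : a < b) (ht : b ≤ t) : ramp a b t = 1 := by
  rw [ramp, projIcc_of_right_le]
  rw [one_le_div (by linarith)]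
  linarith

lemma ramp_mem_Icc (a b t : ℝ) : ramp a b t ∈ Icc 0 1 := (projIcc _ _ _ _).2

/-- Plateaus `[x k, x k + ℓ]` joined by linear ramps on `[x k + ℓ, x (k + 1)]`. -/
def staircase (x : ℕ → ℝ) (ℓ : ℝ) (M : ℕ) (v : ℕ → ℝ) (t : ℝ) : ℝ :=
  v 0 + ∑ n ∈ Finset.range M, (v (n + 1) - v n) * ramp (x n + ℓ) (x (n + 1)) t

lemma continuous_staircase (x : ℕ → ℝ) (ℓ : ℝ) (M : ℕ) (v : ℕ → ℝ) :
    Continuous (staircase x ℓ M v) :=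
  continuous_const.add <| continuous_finsetSum _ fun _ _ =>
    continuous_const.mul (continuous_ramp _ _)

section staircase

variable {x : ℕ → ℝ} {ℓ : ℝ} {M k : ℕ} {t : ℝ}

lemma staircase_eq (hℓ : 0 ≤ ℓ) (hx : ∀ n, x n + ℓ < x (n + 1)) (v : ℕ → ℝ) (hk : k < M)
    (ht : t ∈ Icc (x k) (x (k + 1))) :
    staircase x ℓ M v t = v k + (v (k + 1) - v k) * ramp (x k + ℓ) (x (k + 1)) t := by
  have hmono : Monotone x := monotone_nat_of_le_succ fun n => by linarith [hx n]
  have hbelow : ∀ n ∈ Finset.range k, (v (n + 1) - v n) * ramp (x n + ℓ) (x (n + 1)) t =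
      v (n + 1) - v n := fun n hn => by
    rw [ramp_of_right_le (hx n) ((hmono (Finset.mem_range.1 hn)).trans ht.1), mul_one]
  have habove : ∀ n ∈ Finset.Ico (k + 1) M, (v (n + 1) - v n) * ramp (x n + ℓ) (x (n + 1)) t =
      0 := fun n hn => by
    rw [ramp_of_le_left (hx n).le (ht.2.trans ((hmono (Finset.mem_Ico.1 hn).1).trans
      (le_add_of_nonneg_right hℓ))), mul_zero]
  rw [staircase, ← Finset.sum_range_add_sum_Ico _ hk.le, Finset.sum_eq_sum_Ico_succ_bot hk,
    Finset.sum_congr rfl hbelow, Finset.sum_congr rfl habove, Finset.sum_range_sub]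
  simp only [Finset.sum_const_zero]
  ring

lemma staircase_eq_of_mem_plateau (hℓ : 0 ≤ ℓ) (hx : ∀ n, x n + ℓ < x (n + 1)) (v : ℕ → ℝ)
    (hk : k < M) (ht : t ∈ Icc (x k) (x k + ℓ)) : staircase x ℓ M v t = v k := by
  rw [staircase_eq hℓ hx v hk ⟨ht.1, ht.2.trans (hx k).le⟩,
    ramp_of_le_left (hx k).le ht.2, mul_zero, add_zero]

lemma abs_staircase_sub_le (hℓ : 0 ≤ ℓ) (hx : ∀ n, x n + ℓ < x (n + 1)) {v : ℕ → ℝ} {y ε : ℝ}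
    (hk : k < M) (ht : t ∈ Icc (x k) (x (k + 1))) (h₀ : |v k - y| ≤ ε)
    (h₁ : |v (k + 1) - y| ≤ ε) : |staircase x ℓ M v t - y| ≤ ε := by
  obtain ⟨hr₀, hr₁⟩ := ramp_mem_Icc (x k + ℓ) (x (k + 1)) t
  rw [staircase_eq hℓ hx v hk ht]
  rw [abs_le] at h₀ h₁ ⊢
  constructor <;> nlinarith

end staircase

def tent (η c : ℝ) : ℝ →ᵇ ℝ :=
  ofNormedAddCommGroup (fun z => projIcc (0 : ℝ) 1 zero_le_one (1 - |z - c| / η)) (by fun_prop) 1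
    fun z => by
      obtain ⟨h₀, h₁⟩ := (projIcc (0 : ℝ) 1 zero_le_one (1 - |z - c| / η)).2
      rw [Real.norm_eq_abs, abs_le]; constructor <;> linarith

lemma tent_apply (η c z : ℝ) : tent η c z = projIcc (0 : ℝ) 1 zero_le_one (1 - |z - c| / η) := rfl

lemma tent_self {η : ℝ} (c : ℝ) : tent η c c = 1 := by
  simp [tent_apply]

lemma tent_of_le_abs {η c z : ℝ} (hη : 0 < η) (h : η ≤ |z - c|) : tent η c z = 0 := by
  rw [tent_apply, projIcc_of_le_left]
  rwa [sub_nonpos, one_le_div hη]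

section bumps

variable {κ : Type*} {η : ℝ} {S : Finset κ} {c v : κ → ℝ}

lemma sum_smul_tent_apply_eq (hη : 0 < η)
    (hS : (S : Set κ).Pairwise fun p p' => 2 * η ≤ |c p - c p'|) {p₀ : κ} (hp₀ : p₀ ∈ S) {z : ℝ}
    (hz : |z - c p₀| < η) : (∑ p ∈ S, v p • tent η (c p)) z = v p₀ * tent η (c p₀) z := by
  rw [BoundedContinuousFunction.coe_sum, Finset.sum_apply]
  refine Finset.sum_eq_single_of_mem p₀ hp₀ fun p hp hne => ?_
  have hsep := hS hp hp₀ hne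
  have : η ≤ |z - c p| := by
    have := abs_sub_le (c p) z (c p₀)
    rw [abs_sub_comm (c p) z] at this
    linarith
  simp [tent_of_le_abs hη this]

lemma sum_smul_tent_apply_center (hη : 0 < η)
    (hS : (S : Set κ).Pairwise fun p p' => 2 * η ≤ |c p - c p'|) {p₀ : κ} (hp₀ : p₀ ∈ S) :
    (∑ p ∈ S, v p • tent η (c p)) (c p₀) = v p₀ := by
  rw [sum_smul_tent_apply_eq hη hS hp₀ (by simpa using hη), tent_self, mul_one]

lemma norm_sum_smul_tent_le (hη : 0 < η)
    (hS : (S : Set κ).Pairwise fun p p' => 2 * η ≤ |c p - c p'|) {V : ℝ} (hV : 0 ≤ V)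
    (hv : ∀ p ∈ S, |v p| ≤ V) : ‖∑ p ∈ S, v p • tent η (c p)‖ ≤ V := by
  refine (norm_le hV).2 fun z => ?_
  by_cases hz : ∃ p₀ ∈ S, |z - c p₀| < η
  · obtain ⟨p₀, hp₀, hz⟩ := hz
    obtain ⟨h₀, h₁⟩ := (projIcc (0 : ℝ) 1 zero_le_one (1 - |z - c p₀| / η)).2
    rw [sum_smul_tent_apply_eq hη hS hp₀ hz, norm_mul, Real.norm_eq_abs, Real.norm_eq_abs,
      tent_apply, abs_of_nonneg h₀]
    exact (mul_le_of_le_one_right (abs_nonneg _) h₁).trans (hv p₀ hp₀)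
  · push Not at hz
    rw [BoundedContinuousFunction.coe_sum, Finset.sum_apply,
      Finset.sum_eq_zero fun p hp => by simp [tent_of_le_abs hη (hz p hp)]]
    simpa using hV

end bumps

/-- The `k`-th block `[blockStart N q k, blockStart N q (k + 1)]` of the `q`-th grid has length
`1 / N`; its first `4 / 5` is a plateau and the rest a gap. The five grids are shifted against
each other by `1 / (5 N)`, so that a point lies in a gap of at most one of them. -/
def blockStart (N : ℕ) (q : Fin 5) (k : ℕ) : ℝ := (5 * k + q - 5) / (5 * N)

def InGap (N : ℕ) (q : Fin 5) (t : ℝ) : Prop :=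
  ∃ k : ℕ, blockStart N q k + 4 / (5 * N) < t ∧ t < blockStart N q (k + 1)

section grid

variable {N : ℕ} {q : Fin 5} {t : ℝ}

lemma blockStart_succ (N : ℕ) (q : Fin 5) (k : ℕ) :
    blockStart N q (k + 1) = blockStart N q k + 1 / N := by
  rcases N.eq_zero_or_pos with rfl | hN
  · simp [blockStart]
  · simp only [blockStart]; field_simp; push_cast; ring

lemma blockStart_add_lt (hN : 0 < N) (q : Fin 5) (k : ℕ) :
    blockStart N q k + 4 / (5 * N) < blockStart N q (k + 1) := by
  have : 4 / (5 * N : ℝ) < 1 / N := by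
    rw [div_lt_div_iff₀ (by positivity) (by positivity)]
    linarith [(Nat.cast_pos.2 hN : (0 : ℝ) < N)]
  linarith [blockStart_succ N q k]

lemma exists_mem_block (hN : 0 < N) (q : Fin 5) (ht : t ∈ Icc (0 : ℝ) 1) :
    ∃ k < N + 2, t ∈ Ico (blockStart N q k) (blockStart N q (k + 1)) := by
  have hq : (q : ℝ) ≤ 4 := by exact_mod_cast Nat.le_of_lt_succ q.isLt
  have hN' : (0 : ℝ) < 5 * N := by positivity
  set u := (5 * N * t - q + 5) / 5 with hu_def
  have hu : 0 ≤ u := by have := mul_nonneg hN'.le ht.1; linarith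
  refine ⟨⌊u⌋₊, (Nat.floor_lt hu).2 ?_, ?_, ?_⟩
  · push_cast
    nlinarith [ht.2]
  · have := Nat.floor_le hu
    rw [blockStart, div_le_iff₀ hN']
    linarith
  · have := Nat.lt_floor_add_one u
    rw [blockStart, lt_div_iff₀ hN']
    push_cast
    linarith

lemma exists_mem_plateau (hN : 0 < N) (q : Fin 5) (ht : t ∈ Icc (0 : ℝ) 1)
    (hgap : ¬ InGap N q t) :
    ∃ k < N + 2, t ∈ Icc (blockStart N q k) (blockStart N q k + 4 / (5 * N)) := by
  obtain ⟨k, hk, ht₀, ht₁⟩ := exists_mem_block hN q ht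
  exact ⟨k, hk, ht₀, not_lt.1 fun h => hgap ⟨k, h, ht₁⟩⟩

lemma eq_of_inGap (hN : 0 < N) {q q' : Fin 5} (h : InGap N q t) (h' : InGap N q' t) : q = q' := by
  have hN' : (0 : ℝ) < 5 * N := by positivity
  have scaled : ∀ (q : Fin 5), InGap N q t →
      ∃ j : ℕ, j % 5 = q ∧ (j : ℝ) - 1 < 5 * N * t ∧ 5 * N * t < j := by
    rintro q ⟨k, hk₀, hk₁⟩
    refine ⟨5 * k + q, by omega, ?_, ?_⟩
    · rw [blockStart, ← add_div, div_lt_iff₀ hN'] at hk₀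
      push_cast; linarith
    · rw [blockStart, lt_div_iff₀ hN'] at hk₁
      push_cast at hk₁ ⊢; linarith
  obtain ⟨j, hj, hj₀, hj₁⟩ := scaled q h
  obtain ⟨j', hj', hj₀', hj₁'⟩ := scaled q' h'
  have h₁ : j < j' + 1 := by exact_mod_cast (by linarith : (j : ℝ) < j' + 1)
  have h₂ : j' < j + 1 := by exact_mod_cast (by linarith : (j' : ℝ) < j + 1)
  exact Fin.ext (by omega)

end grid

def node (N : ℕ) (q : Fin 5) (k : ℕ) : I := projIcc 0 1 zero_le_one (blockStart N q k)

lemma dist_node_le (N : ℕ) (q : Fin 5) (k : ℕ) (t : I) :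
    dist (node N q k) t ≤ |blockStart N q k - t| := by
  rw [Subtype.dist_eq, Real.dist_eq]
  simpa [node, projIcc_of_mem _ t.2] using
    abs_projIcc_sub_projIcc zero_le_one (c := blockStart N q k) (d := (t : ℝ))

def gridStair (N : ℕ) (q : Fin 5) (v : ℕ → ℝ) : C(I, ℝ) :=
  ⟨fun t => staircase (blockStart N q) (4 / (5 * N)) (N + 2) v t,
    (continuous_staircase _ _ _ _).comp continuous_subtype_val⟩

section gridStair

variable {N : ℕ} {q : Fin 5}

lemma gridStair_eq_of_mem_plateau (hN : 0 < N) (v : ℕ → ℝ) {k : ℕ} (hk : k < N + 2) {t : I}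
    (ht : (t : ℝ) ∈ Icc (blockStart N q k) (blockStart N q k + 4 / (5 * N))) :
    gridStair N q v t = v k :=
  staircase_eq_of_mem_plateau (by positivity) (blockStart_add_lt hN q) v hk ht

lemma abs_gridStair_sub_le (hN : 0 < N) {g : C(I, ℝ)} {ε ε' : ℝ}
    (hg : ∀ s t : I, dist s t ≤ 1 / N → |g s - g t| ≤ ε) {v : ℕ → ℝ}
    (hv : ∀ n ≤ N + 2, |v n - g (node N q n)| ≤ ε') (t : I) :
    |gridStair N q v t - g t| ≤ ε' + ε := by
  obtain ⟨k, hk, ht₀, ht₁⟩ := exists_mem_block hN q t.2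
  have hnode : ∀ n ≤ N + 2, |blockStart N q n - t| ≤ 1 / N → |v n - g t| ≤ ε' + ε :=
    fun n hn h =>
      calc |v n - g t| ≤ |v n - g (node N q n)| + |g (node N q n) - g t| := abs_sub_le _ _ _
        _ ≤ ε' + ε := add_le_add (hv n hn) (hg _ _ ((dist_node_le N q n t).trans h))
  have hstep := blockStart_succ N q k
  have hN' : (0 : ℝ) ≤ 1 / N := by positivity
  exact abs_staircase_sub_le (by positivity) (blockStart_add_lt hN q) hk ⟨ht₀, ht₁.le⟩
    (hnode k (by omega) (abs_le.2 ⟨by linarith, by linarith⟩))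
    (hnode (k + 1) (by omega) (abs_le.2 ⟨by linarith, by linarith⟩))

end gridStair

/-- After rounding to `β ℤ`, only the terms `γ k` tell the sums of values at distinct pairs of
nodes apart. -/
def nodeValue (g : C(I, ℝ)) (β γ : ℝ) (N : ℕ) (q : Fin 5) (k : ℕ) : ℝ :=
  β * ⌊g (node N q k) / β⌋ + γ * k

lemma abs_nodeValue_sub_le {β γ : ℝ} (hβ : 0 < β) (hγ : 0 ≤ γ) (g : C(I, ℝ)) (N : ℕ) (q : Fin 5)
    (k : ℕ) : |nodeValue g β γ N q k - g (node N q k)| ≤ β + γ * k := by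
  have h₀ := Int.sub_floor_div_mul_nonneg (g (node N q k)) hβ
  have h₁ := Int.sub_floor_div_mul_lt (g (node N q k)) hβ
  have : 0 ≤ γ * k := by positivity
  rw [nodeValue, abs_le]
  constructor <;> linarith

open Classical in
lemma three_le_card_filter_not_inGap (hN : 0 < N) (s t : ℝ) :
    3 ≤ (Finset.univ.filter fun q : Fin 5 => ¬ InGap N q s ∧ ¬ InGap N q t).card := by
  have hsub : (Finset.univ.filter fun q : Fin 5 => ¬ (¬ InGap N q s ∧ ¬ InGap N q t)) ⊆
      Finset.univ.filter (InGap N · s) ∪ Finset.univ.filter (InGap N · t) := by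
    intro q; simp only [Finset.mem_filter, Finset.mem_union]; tauto
  have hone : ∀ u, (Finset.univ.filter (InGap N · u)).card ≤ 1 := fun u =>
    Finset.card_le_one.2 fun q hq q' hq' =>
      eq_of_inGap hN (Finset.mem_filter.1 hq).2 (Finset.mem_filter.1 hq').2
  have := Finset.card_filter_add_card_filter_not (s := Finset.univ)
    (fun q : Fin 5 => ¬ InGap N q s ∧ ¬ InGap N q t)
  have := (Finset.card_le_card hsub).trans (Finset.card_union_le _ _)
  simp only [Finset.card_univ, Fintype.card_fin] at *
  linarith [hone s, hone t]

section Construction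

variable (e₀ : Fin 5 → C(I, ℝ) × C(I, ℝ)) (β : ℝ) (N : ℕ)

/-- The slopes `β / (N + 2)` and `β / (N + 2) ^ 2` make `(N + 2) k + l` a base-`(N + 2)`
expansion, so that the centres of distinct plateau rectangles are `β / (N + 2) ^ 2` apart. -/
def gridInner : Fin 5 → C(I, ℝ) × C(I, ℝ) := fun q =>
  (gridStair N q (nodeValue (e₀ q).1 β (β / (N + 2)) N q),
    gridStair N q (nodeValue (e₀ q).2 β (β / (N + 2) ^ 2) N q))

def gridCenter (q : Fin 5) (p : ℕ × ℕ) : ℝ :=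
  nodeValue (e₀ q).1 β (β / (N + 2)) N q p.1 + nodeValue (e₀ q).2 β (β / (N + 2) ^ 2) N q p.2

def gridOuter (f : C(I × I, ℝ)) (q : Fin 5) : ℝ →ᵇ ℝ :=
  ∑ p ∈ Finset.range (N + 2) ×ˢ Finset.range (N + 2),
    (f (node N q p.1, node N q p.2) / 3) • tent (β / (2 * (N + 2) ^ 2)) (gridCenter e₀ β N q p)

variable {e₀ β N}

lemma gridCenter_pairwise (hβ : 0 < β) (q : Fin 5) :
    ((Finset.range (N + 2) ×ˢ Finset.range (N + 2) : Finset (ℕ × ℕ)) : Set (ℕ × ℕ)).Pairwise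
      fun p p' =>
        2 * (β / (2 * (N + 2) ^ 2)) ≤ |gridCenter e₀ β N q p - gridCenter e₀ β N q p'| := by
  rintro ⟨k, l⟩ hp ⟨k', l'⟩ hp' hne
  simp only [Finset.coe_product, Finset.coe_range, mem_prod, mem_Iio] at hp hp'
  obtain ⟨hk, hl⟩ := hp
  obtain ⟨hk', hl'⟩ := hp'
  set E : ℤ := (N + 2) * ((k : ℤ) - k') + ((l : ℤ) - l')
  have hE : E ≠ 0 := by
    intro hE
    rcases lt_trichotomy k k' with h | rfl | h
    · nlinarith
    · exact hne (by simp only [E] at hE; congr 1; omega)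
    · nlinarith
  have hEK : |E| < ((N + 2) ^ 2 : ℕ) := by
    rw [abs_lt]; push_cast; constructor <;> nlinarith
  have hsep := le_abs_mul_add_mul (β := β) (γ := β / (N + 2) ^ 2) (by positivity)
    (by rw [Nat.cast_pow, Nat.cast_add, Nat.cast_two, div_mul_cancel₀ _ (by positivity)]) hE hEK
    (D := ⌊(e₀ q).1 (node N q k) / β⌋ + ⌊(e₀ q).2 (node N q l) / β⌋
      - ⌊(e₀ q).1 (node N q k') / β⌋ - ⌊(e₀ q).2 (node N q l') / β⌋)
  convert hsep using 2
  · field_simp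
  · simp only [gridCenter, nodeValue, E]
    push_cast
    field_simp
    ring

lemma norm_gridOuter_le (hβ : 0 < β) (f : C(I × I, ℝ)) (q : Fin 5) :
    ‖gridOuter e₀ β N f q‖ ≤ ‖f‖ / 3 :=
  norm_sum_smul_tent_le (by positivity) (gridCenter_pairwise hβ q) (by positivity)
    fun p _ => by
      rw [abs_div, abs_of_pos (by norm_num : (0 : ℝ) < 3)]
      gcongr
      exact f.norm_coe_le_norm _

lemma gridOuter_apply_of_mem_plateau (hN : 0 < N) (hβ : 0 < β) (f : C(I × I, ℝ)) {q : Fin 5}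
    {k l : ℕ} (hk : k < N + 2) (hl : l < N + 2) {s t : I}
    (hs : (s : ℝ) ∈ Icc (blockStart N q k) (blockStart N q k + 4 / (5 * N)))
    (ht : (t : ℝ) ∈ Icc (blockStart N q l) (blockStart N q l + 4 / (5 * N))) :
    gridOuter e₀ β N f q ((gridInner e₀ β N q).1 s + (gridInner e₀ β N q).2 t) =
      f (node N q k, node N q l) / 3 := by
  have hsum : (gridInner e₀ β N q).1 s + (gridInner e₀ β N q).2 t = gridCenter e₀ β N q (k, l) :=
    congrArg₂ (· + ·) (gridStair_eq_of_mem_plateau hN _ hk hs)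
      (gridStair_eq_of_mem_plateau hN _ hl ht)
  rw [hsum, gridOuter]
  exact sum_smul_tent_apply_center (v := fun p => f (node N q p.1, node N q p.2) / 3)
    (c := gridCenter e₀ β N q) (by positivity) (gridCenter_pairwise hβ q)
    (Finset.mem_product.2 ⟨Finset.mem_range.2 hk, Finset.mem_range.2 hl⟩)

lemma dist_gridInner_le (hN : 0 < N) (hβ : 0 < β) {ε : ℝ} (hε : 0 ≤ ε)
    (he₀ : ∀ q, (∀ s t : I, dist s t ≤ 1 / N → |(e₀ q).1 s - (e₀ q).1 t| ≤ ε) ∧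
      ∀ s t : I, dist s t ≤ 1 / N → |(e₀ q).2 s - (e₀ q).2 t| ≤ ε) :
    dist (gridInner e₀ β N) e₀ ≤ 2 * β + ε := by
  have hN' : (0 : ℝ) < N + 2 := by positivity
  have hnode : ∀ (g : C(I, ℝ)) (γ : ℝ), 0 ≤ γ → γ * (N + 2) ≤ β → ∀ q, ∀ n ≤ N + 2,
      |nodeValue g β γ N q n - g (node N q n)| ≤ 2 * β := fun g γ hγ hγβ q n hn => by
    have : γ * n ≤ γ * (N + 2) := by gcongr; exact_mod_cast hn
    linarith [abs_nodeValue_sub_le hβ hγ g N q n]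
  refine (dist_pi_le_iff (by positivity)).2 fun q => Prod.dist_eq.le.trans <| max_le ?_ ?_
  · refine (ContinuousMap.dist_le (by positivity)).2 fun t => ?_
    rw [Real.dist_eq]
    exact abs_gridStair_sub_le hN (he₀ q).1 (hnode _ _ (by positivity) (by field_simp; rfl) q) t
  · refine (ContinuousMap.dist_le (by positivity)).2 fun t => ?_
    rw [Real.dist_eq]
    refine abs_gridStair_sub_le hN (he₀ q).2 (hnode _ _ (by positivity) ?_ q) t
    rw [div_mul_eq_mul_div, div_le_iff₀ (by positivity)]
    nlinarith [mul_nonneg (mul_pos hβ hN').le (by positivity : (0 : ℝ) ≤ N + 1)]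

open Classical in
lemma abs_sub_superpose_gridInner_le (hN : 0 < N) (hβ : 0 < β) {f : C(I × I, ℝ)} {ε : ℝ}
    (hε : 0 ≤ ε) (hf : ∀ z w : I × I, dist z w ≤ 1 / N → |f z - f w| ≤ ε) (z : I × I) :
    |f z - superpose (gridInner e₀ β N) (gridOuter e₀ β N f) z| ≤ 2 / 3 * ‖f‖ + 5 / 3 * ε := by
  have hplateau : ∀ {q : Fin 5} {k : ℕ} {s : I},
      (s : ℝ) ∈ Icc (blockStart N q k) (blockStart N q k + 4 / (5 * N)) →
      dist (node N q k) s ≤ 1 / N := fun {q k s} hs => by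
    have h₁ : 4 / (5 * N : ℝ) ≤ 1 / N := by
      rw [div_le_div_iff₀ (by positivity) (by positivity)]
      linarith
    have h₂ : (0 : ℝ) ≤ 1 / N := by positivity
    exact (dist_node_le N q k s).trans (abs_le.2 ⟨by linarith [hs.2], by linarith [hs.1]⟩)
  rw [superpose_apply]
  have hcomb := abs_mul_sub_sum_le (p := 3)
    (a := fun q => gridOuter e₀ β N f q ((gridInner e₀ β N q).1 z.1 + (gridInner e₀ β N q).2 z.2))
    (c := f z / 3) (B := ‖f‖ / 3) (ε := ε / 3)
    (three_le_card_filter_not_inGap hN z.1 z.2) ?_ (by positivity) ?_ fun q _ =>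
      ((Real.norm_eq_abs _).symm.trans_le ((gridOuter e₀ β N f q).norm_coe_le_norm _)).trans
        (norm_gridOuter_le hβ f q)
  · rw [Fintype.card_fin, Nat.cast_ofNat, mul_div_cancel₀ _ three_ne_zero] at hcomb
    linarith
  · rw [abs_div, abs_of_pos (by norm_num : (0 : ℝ) < 3)]
    gcongr
    exact f.norm_coe_le_norm z
  · intro q hq
    obtain ⟨hs, ht⟩ := (Finset.mem_filter.1 hq).2
    obtain ⟨k, hk, hks⟩ := exists_mem_plateau hN q z.1.2 hs
    obtain ⟨l, hl, hlt⟩ := exists_mem_plateau hN q z.2.2 ht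
    rw [gridOuter_apply_of_mem_plateau hN hβ f hk hl hks hlt, ← sub_div, abs_div,
      abs_of_pos (by norm_num : (0 : ℝ) < 3)]
    gcongr
    exact hf _ _ (Prod.dist_eq.trans_le (max_le (hplateau hks) (hplateau hlt)))

end Construction

theorem dense_approxSet {f : C(I × I, ℝ)} (hf : f ≠ 0) :
    Dense (approxSet (ι := Fin 5) f (‖f‖ / 3) (4 / 5 * ‖f‖)) := by
  have hf' : 0 < ‖f‖ := norm_pos_iff.2 hf
  refine Metric.dense_iff.2 fun e₀ δ hδ => ?_
  have huc {X : Type} [MetricSpace X] [CompactSpace X] (g : C(X, ℝ)) : UniformContinuous g :=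
    CompactSpace.uniformContinuous_of_continuous g.continuous
  obtain ⟨N, hN, hfN, he₀N⟩ := ((eventually_gt_atTop 0).and
    ((eventually_abs_sub_le_of_dist_le (huc f) (by positivity : 0 < ‖f‖ / 20)).and
      (eventually_all.2 fun q =>
        (eventually_abs_sub_le_of_dist_le (huc (e₀ q).1) (by positivity : 0 < δ / 4)).and
        (eventually_abs_sub_le_of_dist_le (huc (e₀ q).2) (by positivity : 0 < δ / 4))))).exists
  refine ⟨gridInner e₀ (δ / 4) N, ?_, gridOuter e₀ (δ / 4) N f,
    fun q => norm_gridOuter_le (by positivity) f q, ?_⟩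
  · rw [Metric.mem_ball]
    linarith [dist_gridInner_le hN (β := δ / 4) (by positivity) (by positivity) he₀N]
  · refine lt_of_le_of_lt ((ContinuousMap.norm_le _ (by positivity)).2 fun z => ?_)
      (by linarith : 2 / 3 * ‖f‖ + 5 / 3 * (‖f‖ / 20) < 4 / 5 * ‖f‖)
    rw [ContinuousMap.sub_apply, Real.norm_eq_abs]
    exact abs_sub_superpose_gridInner_le hN (by positivity) (by positivity) hfN z

theorem exists_superpose_eq (F : C(I × I, ℝ)) :
    ∃ (e : Fin 5 → C(I, ℝ) × C(I, ℝ)) (Φ : Fin 5 → ℝ →ᵇ ℝ), superpose e Φ = F := by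
  obtain ⟨u, hu⟩ := TopologicalSpace.exists_dense_seq C(I × I, ℝ)
  have : BaireSpace (Fin 5 → C(I, ℝ) × C(I, ℝ)) := BaireSpace.of_completelyPseudoMetrizable
  obtain ⟨e, he⟩ := (dense_iInter_of_isOpen (fun n : {n // u n ≠ 0} => isOpen_approxSet _ _ _)
    fun n => dense_approxSet n.2).nonempty
  refine ⟨e, (superpose e).surjective_of_approx_preimage (C := 1) (r := 9 / 10) (by norm_num)
    (fun g => ?_) F⟩
  obtain ⟨Φ, hΦ, hΦg⟩ :=
    exists_approx_of_forall_mem_approxSet hu (fun n hn => mem_iInter.1 he ⟨n, hn⟩) g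
  exact ⟨Φ, by simpa using hΦ, by simpa using hΦg⟩

theorem exists_continuous_superposition (F : C(I × I, ℝ)) :
    ∃ (Φ : Fin 5 → ℝ → ℝ) (φ : Fin 5 → Fin 2 → ℝ → ℝ),
      (∀ q, Continuous (Φ q)) ∧ (∀ q p, Continuous (φ q p)) ∧
      ∀ s t : I, F (s, t) = ∑ q, Φ q (φ q 0 s + φ q 1 t) := by
  obtain ⟨e, Φ, h⟩ := exists_superpose_eq F
  refine ⟨fun q => Φ q, fun q p x => ![(e q).1, (e q).2] p (projIcc 0 1 zero_le_one x),
    fun q => (Φ q).continuous, fun q p => ?_, fun s t => ?_⟩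
  · fin_cases p <;> exact (ContinuousMap.continuous _).comp continuous_projIcc
  · simp [← h, superpose_apply]

end KolmogorovArnold

/-- The `n = 2` instance of the Kolmogorov–Arnold representation theorem: the
outer sum has exactly `2·2 + 1 = 5` terms. -/
theorem kolmogorov_arnold_dim_two (f : (Fin 2 → ℝ) → ℝ)
    (hf : ContinuousOn f (Set.Icc 0 1)) :
    ∃ (Φ : Fin 5 → ℝ → ℝ) (φ : Fin 5 → Fin 2 → ℝ → ℝ),
      (∀ q, Continuous (Φ q)) ∧
      (∀ q p, Continuous (φ q p)) ∧
      ∀ x ∈ Set.Icc (0 : Fin 2 → ℝ) 1,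
        f x = ∑ q, Φ q (φ q 0 (x 0) + φ q 1 (x 1)) := by
  have hmem : ∀ z : I × I, ![(z.1 : ℝ), z.2] ∈ Set.Icc (0 : Fin 2 → ℝ) 1 := fun z =>
    ⟨fun i => by fin_cases i <;> simp [z.1.2.1, z.2.2.1],
      fun i => by fin_cases i <;> simp [z.1.2.2, z.2.2.2]⟩
  obtain ⟨Φ, φ, hΦ, hφ, hrep⟩ := KolmogorovArnold.exists_continuous_superposition
    ⟨fun z => f ![(z.1 : ℝ), z.2], hf.comp_continuous (by fun_prop) hmem⟩
  refine ⟨Φ, φ, hΦ, hφ, fun x hx => ?_⟩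
  rw [show x = ![x 0, x 1] by ext i; fin_cases i <;> rfl]
  exact hrep ⟨x 0, hx.1 0, hx.2 0⟩ ⟨x 1, hx.1 1, hx.2 1⟩
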